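/- arXiv:2305.14884 — 3 statements merged into one kernel-verified Lean document; each statement's English description precedes it below -/
import Mathlib

section
/- Let R be a commutative Q-algebra, Λ an invertible symmetric N×N matrix over R, P an invertible N×N matrix over R, and f ∈ R[x_1,…,x_N]⟦ħ^{1/2}⟧. Then ⟨f(P·x)⟩_{x, PᵗΛP} = ⟨f(x)⟩_{x, Λ}, where f(P·x) denotes the result of substituting the linear forms (Px)_1,…,(Px)_N for x_1,…,x_N in f. -/
open scoped BigOperators
open Matrix

noncomputable section Defs

/-- Formal exponential of a power series (agreeing with the genuine exponential
whenever the constant term of `g` vanishes). -/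
def expPS {A : Type*} [CommRing A] [Algebra ℚ A] (g : PowerSeries A) : PowerSeries A :=
  PowerSeries.mk fun n => ∑ m ∈ Finset.range (n + 1),
    ((m.factorial : ℚ)⁻¹) • PowerSeries.coeff n (g ^ m)

/-- Substitution along a ring homomorphism `S : A →+* A⟦t⟧`, applied
coefficientwise to a power series in `t` and re-expanded in `t`. -/
def substAlong {A : Type*} [CommRing A] (S : A →+* PowerSeries A) (f : PowerSeries A) :
    PowerSeries A :=
  PowerSeries.mk fun n => ∑ m ∈ Finset.range (n + 1),
    PowerSeries.coeff (n - m) (S (PowerSeries.coeff m f))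

/-- The second order differential operator `Σ_{i,j} L i j ∂_i ∂_j` on polynomials. -/
def gaussD {R : Type*} [CommRing R] {ι : Type*} [Fintype ι] (L : Matrix ι ι R)
    (p : MvPolynomial ι R) : MvPolynomial ι R :=
  ∑ i, ∑ j, L i j • MvPolynomial.pderiv i (MvPolynomial.pderiv j p)

/-- `exp((1/2) Σ_{i,j} L_{ij} ∂_i ∂_j) p |_{x = 0}`; the exponential series
terminates on polynomials since the operator lowers total degree by two. -/
def gaussBV {R : Type*} [CommRing R] [Algebra ℚ R] {ι : Type*} [Fintype ι]
    (L : Matrix ι ι R) (p : MvPolynomial ι R) : R :=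
  MvPolynomial.constantCoeff
    (∑ m ∈ Finset.range (p.totalDegree + 1),
      ((1 : ℚ) / ((2 : ℚ) ^ m * m.factorial)) • (gaussD L)^[m] p)

/-- Formal Gaussian integration `⟨f⟩_{x,Λ}` of a formal power series with
polynomial coefficients, with respect to the invertible symmetric matrix `Λ`. -/
def fgi {R : Type*} [CommRing R] [Algebra ℚ R] {ι : Type*} [Fintype ι] [DecidableEq ι]
    (Λ : Matrix ι ι R) (f : PowerSeries (MvPolynomial ι R)) : PowerSeries R :=
  PowerSeries.mk fun n => gaussBV Λ⁻¹ (PowerSeries.coeff n f)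

/-- Polynomial numerators of the negative polylogarithms:
`Li_{-n}(z) = LiPoly n (z) / (1-z)^(n+1)`. -/
def LiPoly : ℕ → Polynomial ℚ
  | 0 => Polynomial.X
  | n + 1 => Polynomial.X *
      (Polynomial.derivative (LiPoly n) * (1 - Polynomial.X) + ((n : ℚ) + 1) • LiPoly n)

/-- The rational function `Li_{-n}(z)`, defined recursively by
`Li_0(z) = z/(1-z)` and `Li_{-n-1}(z) = z · (d/dz) Li_{-n}(z)`. -/
def negLi {K : Type*} [Field K] [CharZero K] (n : ℕ) (z : K) : K :=
  Polynomial.aeval z (LiPoly n) / (1 - z) ^ (n + 1)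

/-- The formal power series `ψ_ħ(ξ, z)` in `t = ħ^{1/2}`:
`exp(−Σ_{k,ℓ ≥ 0, k+ℓ/2 > 1} (B_k ξ^ℓ ħ^{k+ℓ/2−1}/(ℓ! k!)) Li_{2−k−ℓ}(z))`. -/
def psi {K : Type*} [Field K] [CharZero K] {A : Type*} [CommRing A] [Algebra ℚ A]
    [Algebra K A] (ξ : A) (z : K) : PowerSeries A :=
  expPS (PowerSeries.mk fun n =>
    if n = 0 then 0 else
      - ∑ k ∈ Finset.range ((n + 2) / 2 + 1),
          algebraMap K A
              ((bernoulli k / ((k.factorial : ℚ) * ((n + 2 - 2 * k).factorial : ℚ))) •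
                negLi (n - k) z) *
            ξ ^ (n + 2 - 2 * k))

end Defs

noncomputable section AuxLCV

open MvPolynomial

namespace AuxLCV

variable {R : Type*} [CommRing R] {ι : Type*} [Fintype ι] [DecidableEq ι]

omit [DecidableEq ι] in
lemma finsupp_sum_eq (v : ι →₀ ℕ) : (v.sum fun _ e => e) = ∑ j, v j :=
  Finsupp.sum_fintype _ _ fun _ => rfl

lemma tdeg_pderiv {d : ℕ} (i : ι) {p : MvPolynomial ι R} (h : p.totalDegree ≤ d + 1) :
    (pderiv i p).totalDegree ≤ d := by
  conv_lhs => rw [p.as_sum]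
  rw [map_sum]
  apply totalDegree_finsetSum_le
  intro v hv
  rw [pderiv_monomial]
  by_cases hvi : v i = 0
  · simp [hvi]
  · refine (totalDegree_monomial_le _ _).trans ?_
    have hvd : (v.sum fun _ e => e) ≤ d + 1 := (le_totalDegree hv).trans h
    rw [finsupp_sum_eq] at hvd
    have hrw : ((v - Finsupp.single i 1).sum fun _ => id)
        = ∑ j, (v - Finsupp.single i 1 : ι →₀ ℕ) j :=
      Finsupp.sum_fintype _ _ fun _ => rfl
    rw [hrw]
    have e1 : ∑ j, v j = ∑ j ∈ Finset.univ.erase i, v j + v i :=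
      (Finset.sum_erase_add _ _ (Finset.mem_univ i)).symm
    have e2 : ∑ j, (v - Finsupp.single i 1 : ι →₀ ℕ) j
        = ∑ j ∈ Finset.univ.erase i, v j + (v i - 1) := by
      rw [← Finset.sum_erase_add _ _ (Finset.mem_univ i)]
      congr 1
      · refine Finset.sum_congr rfl fun j hj => ?_
        rw [Finsupp.tsub_apply, Finsupp.single_apply,
          if_neg (fun h => (Finset.mem_erase.mp hj).1 h.symm), tsub_zero]
      · rw [Finsupp.tsub_apply, Finsupp.single_apply, if_pos rfl]
    omega

lemma pderiv_eq_zero_of_tdeg_zero {p : MvPolynomial ι R} (h : p.totalDegree = 0) (i : ι) :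
    pderiv i p = 0 := by
  conv_lhs => rw [p.as_sum]
  rw [map_sum]
  refine Finset.sum_eq_zero fun v hv => ?_
  have hvi : v i = 0 := by
    have h1 : (v.sum fun _ e => e) ≤ 0 := h ▸ le_totalDegree hv
    have h2 : v i ≤ v.sum fun _ e => e := by
      rw [finsupp_sum_eq]
      exact Finset.single_le_sum (fun _ _ => Nat.zero_le _) (Finset.mem_univ i)
    omega
  rw [pderiv_monomial, hvi]
  simp

lemma gaussD_tdeg (L : Matrix ι ι R) {d : ℕ} {p : MvPolynomial ι R}
    (h : p.totalDegree ≤ d + 1) : (gaussD L p).totalDegree ≤ d := by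
  apply totalDegree_finsetSum_le
  intro i _
  apply totalDegree_finsetSum_le
  intro j _
  refine (totalDegree_smul_le _ _).trans ?_
  exact tdeg_pderiv i ((tdeg_pderiv j h).trans (Nat.le_succ d))

lemma gaussD_eq_zero_of_tdeg_zero (L : Matrix ι ι R) {p : MvPolynomial ι R}
    (h : p.totalDegree = 0) : gaussD L p = 0 := by
  simp [gaussD, pderiv_eq_zero_of_tdeg_zero h]

lemma gaussD_iterate_eq_zero (L : Matrix ι ι R) :
    ∀ (m : ℕ) (p : MvPolynomial ι R), p.totalDegree < m → (gaussD L)^[m] p = 0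
  | 0, _, h => absurd h (Nat.not_lt_zero _)
  | m + 1, p, h => by
    rw [Function.iterate_succ_apply]
    rcases Nat.eq_zero_or_pos m with rfl | hm
    · rw [gaussD_eq_zero_of_tdeg_zero L (Nat.lt_one_iff.mp h)]
      simp
    · apply gaussD_iterate_eq_zero L m
      have h1 : p.totalDegree ≤ (m - 1) + 1 := by omega
      exact lt_of_le_of_lt (gaussD_tdeg L h1) (by omega)

lemma pderiv_aeval (g : ι → MvPolynomial ι R) (i : ι) (p : MvPolynomial ι R) :
    pderiv i (aeval g p) = ∑ k, pderiv i (g k) * aeval g (pderiv k p) := by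
  induction p using MvPolynomial.induction_on with
  | C a => simp
  | add p q hp hq =>
    simp only [_root_.map_add, hp, hq, mul_add, Finset.sum_add_distrib]
  | mul_X p n hp =>
    simp only [_root_.map_mul, aeval_X, pderiv_mul, hp, pderiv_X, _root_.map_add,
      Pi.single_apply, apply_ite (aeval g), _root_.map_one, _root_.map_zero,
      mul_add, mul_ite, mul_one, mul_zero, Finset.sum_add_distrib, Finset.sum_ite_eq,
      Finset.mem_univ, if_true, Finset.sum_mul]
    rw [mul_comm ((aeval g) p)]
    congr 1
    exact Finset.sum_congr rfl fun k _ => mul_assoc _ _ _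

lemma pderiv_gmap (P : Matrix ι ι R) (l i : ι) :
    pderiv i (∑ j, C (P l j) * X j : MvPolynomial ι R) = C (P l i) := by
  rw [map_sum]
  simp only [pderiv_C_mul, pderiv_X, Pi.single_apply, mul_ite, mul_one, mul_zero,
    Finset.sum_ite_eq, Finset.sum_ite_eq', Finset.mem_univ, if_true]

lemma pderiv_aevalP (P : Matrix ι ι R) (j : ι) (q : MvPolynomial ι R) :
    pderiv j (aeval (fun i => ∑ j', C (P i j') * X j') q)
      = ∑ l, C (P l j) * aeval (fun i => ∑ j', C (P i j') * X j') (pderiv l q) := by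
  rw [pderiv_aeval]
  exact Finset.sum_congr rfl fun l _ => by rw [pderiv_gmap]

lemma sum_comm4 {M : Type*} [AddCommMonoid M] (F : ι → ι → ι → ι → M) :
    ∑ i, ∑ j, ∑ l, ∑ k, F i j l k = ∑ k, ∑ l, ∑ j, ∑ i, F i j l k := by
  have h1 : ∀ (G : ι → ι → M), ∑ a, ∑ b, G a b = ∑ b, ∑ a, G a b := fun _ => Finset.sum_comm
  calc ∑ i, ∑ j, ∑ l, ∑ k, F i j l k
      = ∑ i, ∑ l, ∑ j, ∑ k, F i j l k := Finset.sum_congr rfl fun i _ => h1 _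
    _ = ∑ l, ∑ i, ∑ j, ∑ k, F i j l k := h1 _
    _ = ∑ l, ∑ i, ∑ k, ∑ j, F i j l k :=
        Finset.sum_congr rfl fun l _ => Finset.sum_congr rfl fun i _ => h1 _
    _ = ∑ l, ∑ k, ∑ i, ∑ j, F i j l k := Finset.sum_congr rfl fun l _ => h1 _
    _ = ∑ k, ∑ l, ∑ i, ∑ j, F i j l k := h1 _
    _ = ∑ k, ∑ l, ∑ j, ∑ i, F i j l k :=
        Finset.sum_congr rfl fun k _ => Finset.sum_congr rfl fun l _ => h1 _

lemma gaussD_aeval (L P : Matrix ι ι R) (p : MvPolynomial ι R) :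
    gaussD L (aeval (fun i => ∑ j', C (P i j') * X j') p)
      = aeval (fun i => ∑ j', C (P i j') * X j') (gaussD (P * L * Pᵀ) p) := by
  set φ := aeval (R := R) (fun i => ∑ j', C (P i j') * X j') with hφ
  have lhs_eq : ∀ i j : ι, (L i j) • (pderiv i (pderiv j (φ p)))
      = ∑ l, ∑ k, C (L i j) * C (P l j) * C (P k i) * φ (pderiv k (pderiv l p)) := by
    intro i j
    rw [pderiv_aevalP, map_sum, smul_eq_C_mul, Finset.mul_sum]
    refine Finset.sum_congr rfl fun l _ => ?_
    rw [pderiv_C_mul, pderiv_aevalP, Finset.mul_sum, Finset.mul_sum]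
    exact Finset.sum_congr rfl fun k _ => by ring
  have rhs_eq : ∀ k l : ι, φ ((P * L * Pᵀ) k l • pderiv k (pderiv l p))
      = ∑ j, ∑ i, C (L i j) * C (P l j) * C (P k i) * φ (pderiv k (pderiv l p)) := by
    intro k l
    rw [_root_.map_smul, smul_eq_C_mul]
    simp only [Matrix.mul_apply, Matrix.transpose_apply]
    rw [map_sum, Finset.sum_mul]
    refine Finset.sum_congr rfl fun j _ => ?_
    rw [_root_.map_mul, map_sum, Finset.sum_mul, Finset.sum_mul]
    exact Finset.sum_congr rfl fun i _ => by rw [_root_.map_mul]; ring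
  unfold gaussD
  rw [map_sum]
  calc ∑ i, ∑ j, L i j • pderiv i (pderiv j (φ p))
      = ∑ i, ∑ j, ∑ l, ∑ k, C (L i j) * C (P l j) * C (P k i) * φ (pderiv k (pderiv l p)) :=
        Finset.sum_congr rfl fun i _ => Finset.sum_congr rfl fun j _ => lhs_eq i j
    _ = ∑ k, ∑ l, ∑ j, ∑ i, C (L i j) * C (P l j) * C (P k i) * φ (pderiv k (pderiv l p)) :=
        sum_comm4 _
    _ = ∑ k, φ (∑ l, (P * L * Pᵀ) k l • pderiv k (pderiv l p)) := by
        refine Finset.sum_congr rfl fun k _ => ?_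
        rw [map_sum]
        exact (Finset.sum_congr rfl fun l _ => (rhs_eq k l).symm)

lemma constCoeff_phi (P : Matrix ι ι R) (q : MvPolynomial ι R) :
    constantCoeff (aeval (fun i => ∑ j', C (P i j') * X j') q) = constantCoeff q := by
  have h : (constantCoeff : MvPolynomial ι R →+* R).comp
      ((aeval (R := R) (fun i => ∑ j', C (P i j') * X j')).toRingHom) = constantCoeff := by
    apply MvPolynomial.ringHom_ext
    · intro a; simp
    · intro i; simp [map_sum]
  exact RingHom.congr_fun h q

variable [Algebra ℚ R]

lemma phi_qsmul (P : Matrix ι ι R) (c : ℚ) (q : MvPolynomial ι R) :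
    aeval (fun i => ∑ j', C (P i j') * X j') (c • q)
      = c • aeval (fun i => ∑ j', C (P i j') * X j') q := by
  rw [Algebra.smul_def, Algebra.smul_def, _root_.map_mul]
  congr 1
  rw [IsScalarTower.algebraMap_apply ℚ R (MvPolynomial ι R), AlgHom.commutes]

omit [Algebra ℚ R] in
lemma matrix_key (Λ P : Matrix ι ι R) (hP : IsUnit P.det) :
    P * (Pᵀ * Λ * P)⁻¹ * Pᵀ = Λ⁻¹ := by
  rw [Matrix.mul_inv_rev, Matrix.mul_inv_rev, ← Matrix.mul_assoc,
    Matrix.mul_nonsing_inv P hP, Matrix.one_mul, Matrix.mul_assoc,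
    Matrix.nonsing_inv_mul Pᵀ (by rwa [Matrix.det_transpose]), Matrix.mul_one]

lemma gaussBV_aeval (Λ P : Matrix ι ι R) (hP : IsUnit P.det)
    (p : MvPolynomial ι R) :
    gaussBV (Pᵀ * Λ * P)⁻¹ (aeval (fun i => ∑ j', C (P i j') * X j') p)
      = gaussBV Λ⁻¹ p := by
  set φ := aeval (R := R) (fun i => ∑ j', C (P i j') * X j') with hφ
  set L := (Pᵀ * Λ * P)⁻¹ with hL
  have hconj : P * L * Pᵀ = Λ⁻¹ := matrix_key Λ P hP
  have hiter : ∀ m : ℕ, (gaussD L)^[m] (φ p) = φ ((gaussD Λ⁻¹)^[m] p) := by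
    intro m
    induction m with
    | zero => rfl
    | succ m ih =>
        rw [Function.iterate_succ_apply', Function.iterate_succ_apply', ih, hφ,
          gaussD_aeval, hconj]
  unfold gaussBV
  set c : ℕ → ℚ := fun m => (1 : ℚ) / ((2 : ℚ) ^ m * m.factorial) with hc
  set D := max ((φ p).totalDegree) (p.totalDegree) with hD
  have hsum : ∀ (q : MvPolynomial ι R) (L' : Matrix ι ι R), q.totalDegree ≤ D →
      ∑ m ∈ Finset.range (q.totalDegree + 1), c m • (gaussD L')^[m] q
        = ∑ m ∈ Finset.range (D + 1), c m • (gaussD L')^[m] q := by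
    intro q L' hq
    apply Finset.sum_subset
    · exact Finset.range_subset_range.mpr (by omega)
    · intro m hm hm2
      rw [gaussD_iterate_eq_zero L' m q ?_, smul_zero]
      simp only [Finset.mem_range] at hm hm2
      omega
  rw [hsum _ _ (le_max_left _ _), hsum _ _ (le_max_right _ _)]
  rw [show (∑ m ∈ Finset.range (D + 1), c m • (gaussD L)^[m] (φ p))
      = φ (∑ m ∈ Finset.range (D + 1), c m • (gaussD Λ⁻¹)^[m] p) by
    rw [map_sum]
    exact Finset.sum_congr rfl fun m _ => by rw [hiter, hφ, phi_qsmul]]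
  exact constCoeff_phi P _

end AuxLCV

end AuxLCV


/-- Formal Gaussian integration is invariant under a linear
change of variables: `⟨f(P·x)⟩_{x, PᵗΛP} = ⟨f(x)⟩_{x, Λ}`. -/
theorem fgi_linear_change_of_variables {R : Type*} [CommRing R] [Algebra ℚ R] {N : ℕ}
    (Λ P : Matrix (Fin N) (Fin N) R) (hΛsymm : Λᵀ = Λ)
    (hΛ : IsUnit Λ.det) (hP : IsUnit P.det)
    (f : PowerSeries (MvPolynomial (Fin N) R)) :
    fgi (Pᵀ * Λ * P)
        (PowerSeries.map
          (MvPolynomial.aeval fun i =>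
              ∑ j, MvPolynomial.C (P i j) * MvPolynomial.X j :
            MvPolynomial (Fin N) R →ₐ[R] MvPolynomial (Fin N) R).toRingHom f)
      = fgi Λ f := by
  apply PowerSeries.ext
  intro n
  simp only [fgi, PowerSeries.coeff_mk, PowerSeries.coeff_map]
  exact AuxLCV.gaussBV_aeval Λ P hP _
end

section
/- Argument-shift identity for ψ_ħ: let K be a field of characteristic zero and z ∈ K with z ≠ 0 and z ≠ 1. For m ≤ 0 set Li_m(z·e^{xħ^{1/2}}) := Σ_{r≥0} Li_{m−r}(z)·x^r·ħ^{r/2}/r! ∈ K[x]⟦ħ^{1/2}⟧, and let ψ_ħ(0, z·e^{xħ^{1/2}}) be defined by the defining formula of ψ_ħ at x = 0 with each Li_{2−k}(z) replaced by Li_{2−k}(z·e^{xħ^{1/2}}). Then in K[x]⟦ħ^{1/2}⟧ one has ψ_ħ(x, z) = ψ_ħ(0, z·e^{xħ^{1/2}}) · C_ħ(x,z), where C_ħ(x,z) := exp( −Σ_{ℓ≥3} (ħ^{ℓ/2−1}/ℓ!)·Li_{2−ℓ}(z)·x^ℓ + (1/2)·Σ_{ℓ≥1} (ħ^{ℓ/2}/ℓ!)·Li_{1−ℓ}(z)·x^ℓ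 ). -/
open scoped BigOperators
open Matrix

/-- The series `ψ_ħ(0, z e^{xħ^{1/2}})`: the defining formula of `ψ_ħ` at `x = 0`
with each `Li_{2−k}(z)` replaced by
`Li_{2−k}(z e^{xħ^{1/2}}) = Σ_{r≥0} Li_{2−k−r}(z) x^r ħ^{r/2}/r!`. -/
noncomputable def psiZeroShift {K : Type*} [Field K] [CharZero K] {A : Type*} [CommRing A]
    [Algebra ℚ A] [Algebra K A] (ξ : A) (z : K) : PowerSeries A :=
  expPS (PowerSeries.mk fun n =>
    - ∑ k ∈ Finset.Icc 2 (n / 2 + 1),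
        algebraMap K A
            ((bernoulli k / ((k.factorial : ℚ) * ((n + 2 - 2 * k).factorial : ℚ))) •
              negLi (n - k) z) *
          ξ ^ (n + 2 - 2 * k))

/-- The exponent of the factor
`C_ħ(x,z) = exp(−Σ_{ℓ≥3} (ħ^{ℓ/2−1}/ℓ!) Li_{2−ℓ}(z) x^ℓ
           + (1/2) Σ_{ℓ≥1} (ħ^{ℓ/2}/ℓ!) Li_{1−ℓ}(z) x^ℓ)`. -/
noncomputable def cExp {K : Type*} [Field K] [CharZero K] (z : K) :
    PowerSeries (Polynomial K) :=
  PowerSeries.mk fun n =>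
    if n = 0 then 0
    else
      Polynomial.C (-(negLi n z / ((n + 2).factorial : K))) * Polynomial.X ^ (n + 2) +
        Polynomial.C (negLi (n - 1) z / (2 * (n.factorial : K))) * Polynomial.X ^ n


section Helpers

open PowerSeries

set_option linter.unusedSectionVars false

variable {A : Type*} [CommRing A] [Algebra ℚ A]

lemma coeff_pow_zero_of_lt {g : PowerSeries A} (hg : constantCoeff g = 0)
    {n m : ℕ} (h : n < m) : coeff n (g ^ m) = 0 := by
  have hd : (X : PowerSeries A) ^ m ∣ g ^ m :=
    pow_dvd_pow_of_dvd (X_dvd_iff.mpr hg) m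
  exact (X_pow_dvd_iff.mp hd) n h

lemma expPS_coeff_ext {g : PowerSeries A} (hg : constantCoeff g = 0)
    {n N : ℕ} (hN : n < N) :
    coeff n (expPS g) = ∑ m ∈ Finset.range N,
      ((m.factorial : ℚ)⁻¹) • coeff n (g ^ m) := by
  rw [expPS, coeff_mk]
  refine Finset.sum_subset (Finset.range_subset_range.mpr hN) ?_
  intro m hm hm'
  rw [coeff_pow_zero_of_lt hg (by simpa using hm'), smul_zero]

lemma sum_triangle {M : Type*} [AddCommMonoid M] (N : ℕ) (f : ℕ → ℕ → M)
    (hf : ∀ p q, N ≤ p + q → f p q = 0) :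
    ∑ m ∈ Finset.range N, ∑ k ∈ Finset.range (m + 1), f k (m - k)
      = ∑ p ∈ Finset.range N, ∑ q ∈ Finset.range N, f p q := by
  rw [← Finset.sum_product',
    ← Finset.sum_sigma (Finset.range N) (fun m => Finset.range (m + 1))
      (fun x => f x.2 (x.1 - x.2))]
  rw [← Finset.sum_filter_of_ne (s := Finset.range N ×ˢ Finset.range N)
    (p := fun x => x.1 + x.2 < N) (f := fun x => f x.1 x.2)
    (by intro x hx hne; by_contra h; exact hne (hf x.1 x.2 (le_of_not_gt h)))]
  refine Finset.sum_nbij' (fun x => (x.2, x.1 - x.2)) (fun x => ⟨x.1 + x.2, x.1⟩) ?_ ?_ ?_ ?_ ?_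
  · rintro ⟨m, k⟩ hx
    simp only [Finset.mem_sigma, Finset.mem_range] at hx
    simp only [Finset.mem_filter, Finset.mem_product, Finset.mem_range]
    omega
  · rintro ⟨p, q⟩ hx
    simp only [Finset.mem_filter, Finset.mem_product, Finset.mem_range] at hx
    simp only [Finset.mem_sigma, Finset.mem_range]
    omega
  · rintro ⟨m, k⟩ hx
    simp only [Finset.mem_sigma, Finset.mem_range] at hx
    have hkm : k + (m - k) = m := by omega
    simp [hkm]
  · rintro ⟨p, q⟩ hx
    simp
  · rintro ⟨m, k⟩ hx
    rfl

lemma coeff_mul_pow_zero {a b : PowerSeries A} (ha : constantCoeff a = 0)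
    (hb : constantCoeff b = 0) {n p q : ℕ} (h : n < p + q) :
    coeff n (a ^ p * b ^ q) = 0 := by
  have hd : (X : PowerSeries A) ^ (p + q) ∣ a ^ p * b ^ q := by
    rw [pow_add]
    exact mul_dvd_mul (pow_dvd_pow_of_dvd (X_dvd_iff.mpr ha) p)
      (pow_dvd_pow_of_dvd (X_dvd_iff.mpr hb) q)
  exact (X_pow_dvd_iff.mp hd) n h

lemma expPS_mul {a b : PowerSeries A} (ha : constantCoeff a = 0)
    (hb : constantCoeff b = 0) :
    expPS (a + b) = expPS a * expPS b := by
  ext n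
  have hab : constantCoeff (a + b) = 0 := by simp [ha, hb]
  rw [coeff_mul, expPS_coeff_ext hab (Nat.lt_succ_self n)]
  have hR : ∑ x ∈ Finset.HasAntidiagonal.antidiagonal n, coeff x.1 (expPS a) * coeff x.2 (expPS b)
      = ∑ p ∈ Finset.range (n + 1), ∑ q ∈ Finset.range (n + 1),
          (((p.factorial : ℚ)⁻¹ * ((q.factorial : ℚ))⁻¹) • coeff n (a ^ p * b ^ q)) := by
    have h1 : ∀ x ∈ Finset.HasAntidiagonal.antidiagonal n,
        coeff x.1 (expPS a) * coeff x.2 (expPS b)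
          = ∑ p ∈ Finset.range (n + 1), ∑ q ∈ Finset.range (n + 1),
              (((p.factorial : ℚ)⁻¹ * ((q.factorial : ℚ))⁻¹) •
                (coeff x.1 (a ^ p) * coeff x.2 (b ^ q))) := by
      intro x hx
      rw [Finset.HasAntidiagonal.mem_antidiagonal] at hx
      rw [expPS_coeff_ext ha (by omega : x.1 < n + 1),
        expPS_coeff_ext hb (by omega : x.2 < n + 1), Finset.sum_mul_sum]
      refine Finset.sum_congr rfl fun p _ => Finset.sum_congr rfl fun q _ => ?_
      rw [smul_mul_smul_comm]
    rw [Finset.sum_congr rfl h1, Finset.sum_comm]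
    refine Finset.sum_congr rfl fun p _ => ?_
    rw [Finset.sum_comm]
    refine Finset.sum_congr rfl fun q _ => ?_
    rw [← Finset.smul_sum, coeff_mul]
  rw [hR]
  rw [← sum_triangle (n + 1)
    (fun p q => ((p.factorial : ℚ)⁻¹ * ((q.factorial : ℚ))⁻¹) • coeff n (a ^ p * b ^ q))
    (fun p q h => by rw [coeff_mul_pow_zero ha hb (by omega), smul_zero])]
  refine Finset.sum_congr rfl fun m _ => ?_
  rw [add_pow, map_sum, Finset.smul_sum]
  refine Finset.sum_congr rfl fun k hk => ?_
  rw [Finset.mem_range] at hk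
  have hkm : k ≤ m := by omega
  rw [show ((m.choose k : ℕ) : PowerSeries A) = PowerSeries.C ((m.choose k : ℕ) : A) by
      rw [map_natCast], coeff_mul_C]
  rw [show ((m.choose k : ℕ) : A) = algebraMap ℚ A ((m.choose k : ℕ) : ℚ) by rw [map_natCast]]
  rw [mul_comm ((coeff n) (a ^ k * b ^ (m - k))), ← Algebra.smul_def, smul_smul]
  congr 1
  rw [Nat.cast_choose ℚ hkm]
  have h1 : ((m.factorial : ℚ)) ≠ 0 := Nat.cast_ne_zero.mpr m.factorial_ne_zero
  have h2 : ((k.factorial : ℚ)) ≠ 0 := Nat.cast_ne_zero.mpr k.factorial_ne_zero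
  have h3 : (((m - k).factorial : ℚ)) ≠ 0 := Nat.cast_ne_zero.mpr (m - k).factorial_ne_zero
  field_simp


end Helpers

lemma exponent_split {K : Type*} [Field K] [CharZero K] (z : K) (n : ℕ) (hn : n ≠ 0) :
    (- ∑ k ∈ Finset.range ((n + 2) / 2 + 1),
        algebraMap K (Polynomial K)
            ((bernoulli k / ((k.factorial : ℚ) * ((n + 2 - 2 * k).factorial : ℚ))) •
              negLi (n - k) z) *
          (Polynomial.X : Polynomial K) ^ (n + 2 - 2 * k))
    = (- ∑ k ∈ Finset.Icc 2 (n / 2 + 1),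
        algebraMap K (Polynomial K)
            ((bernoulli k / ((k.factorial : ℚ) * ((n + 2 - 2 * k).factorial : ℚ))) •
              negLi (n - k) z) *
          (Polynomial.X : Polynomial K) ^ (n + 2 - 2 * k))
      + (Polynomial.C (-(negLi n z / ((n + 2).factorial : K))) * Polynomial.X ^ (n + 2) +
          Polynomial.C (negLi (n - 1) z / (2 * (n.factorial : K))) * Polynomial.X ^ n) := by
  have hr : Finset.range ((n + 2) / 2 + 1)
      = insert 0 (insert 1 (Finset.Icc 2 (n / 2 + 1))) := by
    ext x
    simp only [Finset.mem_range, Finset.mem_insert, Finset.mem_Icc]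
    omega
  rw [hr, Finset.sum_insert (by simp), Finset.sum_insert (by simp)]
  have h0 : algebraMap K (Polynomial K)
      ((bernoulli 0 / ((Nat.factorial 0 : ℚ) * ((n + 2 - 2 * 0).factorial : ℚ))) •
        negLi (n - 0) z) * (Polynomial.X : Polynomial K) ^ (n + 2 - 2 * 0)
      = Polynomial.C (negLi n z / ((n + 2).factorial : K)) * Polynomial.X ^ (n + 2) := by
    have hf : (((n + 2).factorial : ℚ) : K) = ((n + 2).factorial : K) := by push_cast; ring
    simp only [Nat.mul_zero, Nat.sub_zero, bernoulli_zero, Nat.factorial_zero, one_mul,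
      Polynomial.algebraMap_eq, Rat.smul_def, Rat.cast_div, Rat.cast_one, hf]
    congr 1
    push_cast
    field_simp
  have h1 : algebraMap K (Polynomial K)
      ((bernoulli 1 / ((Nat.factorial 1 : ℚ) * ((n + 2 - 2 * 1).factorial : ℚ))) •
        negLi (n - 1) z) * (Polynomial.X : Polynomial K) ^ (n + 2 - 2 * 1)
      = Polynomial.C (-(negLi (n - 1) z / (2 * (n.factorial : K)))) * Polynomial.X ^ n := by
    have h2 : n + 2 - 2 * 1 = n := by omega
    have hf : ((n.factorial : ℚ) : K) = (n.factorial : K) := by push_cast; ring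
    have hfne : (n.factorial : K) ≠ 0 := Nat.cast_ne_zero.mpr n.factorial_ne_zero
    simp only [h2, bernoulli_one, Nat.factorial_one, one_mul,
      Polynomial.algebraMap_eq, Rat.smul_def, Rat.cast_div, Rat.cast_neg, Rat.cast_one,
      Rat.cast_ofNat, hf]
    congr 1
    rw [div_div]
    push_cast
    field_simp
  rw [h0, h1]
  simp only [map_neg]
  ring

/-- The argument-shift identity for `ψ_ħ`:
`ψ_ħ(x, z) = ψ_ħ(0, z e^{xħ^{1/2}}) · C_ħ(x, z)`. -/
theorem psi_argument_shift {K : Type*} [Field K] [CharZero K] (z : K)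
    (h0 : z ≠ 0) (h1 : z ≠ 1) :
    psi (Polynomial.X : Polynomial K) z
      = psiZeroShift (Polynomial.X : Polynomial K) z * expPS (cExp z) := by
  have hG : PowerSeries.constantCoeff
      (PowerSeries.mk fun n =>
        - ∑ k ∈ Finset.Icc 2 (n / 2 + 1),
            algebraMap K (Polynomial K)
                ((bernoulli k / ((k.factorial : ℚ) * ((n + 2 - 2 * k).factorial : ℚ))) •
                  negLi (n - k) z) *
              (Polynomial.X : Polynomial K) ^ (n + 2 - 2 * k)) = 0 := by
    rw [← PowerSeries.coeff_zero_eq_constantCoeff_apply, PowerSeries.coeff_mk]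
    norm_num
  have hC : PowerSeries.constantCoeff (cExp z) = 0 := by
    rw [← PowerSeries.coeff_zero_eq_constantCoeff_apply, cExp, PowerSeries.coeff_mk]
    simp
  have key : (PowerSeries.mk fun n =>
      if n = 0 then (0 : Polynomial K) else
        - ∑ k ∈ Finset.range ((n + 2) / 2 + 1),
            algebraMap K (Polynomial K)
                ((bernoulli k / ((k.factorial : ℚ) * ((n + 2 - 2 * k).factorial : ℚ))) •
                  negLi (n - k) z) *
              (Polynomial.X : Polynomial K) ^ (n + 2 - 2 * k))
      = (PowerSeries.mk fun n =>
          - ∑ k ∈ Finset.Icc 2 (n / 2 + 1),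
              algebraMap K (Polynomial K)
                  ((bernoulli k / ((k.factorial : ℚ) * ((n + 2 - 2 * k).factorial : ℚ))) •
                    negLi (n - k) z) *
                (Polynomial.X : Polynomial K) ^ (n + 2 - 2 * k)) + cExp z := by
    ext m
    rw [map_add, PowerSeries.coeff_mk, PowerSeries.coeff_mk, cExp, PowerSeries.coeff_mk]
    by_cases hm : m = 0
    · subst hm; norm_num
    · rw [if_neg hm, if_neg hm, exponent_split z m hm]
  rw [psi, psiZeroShift, key, expPS_mul hG hC]
end

section
/- Matrix identities for the 2–3 move (full rank case): let A = (a_1|a_2|a_*), B = (b_1|b_2|b_*) be (N+2)×(N+2) matrices over a field of characteristic zero (a_1,a_2,b_1,b_2 single columns), with B invertible, and write Q := B^{−1}A with blocks Q_{11},Q_{12},Q_{22} (scalars), Q_1^*,Q_2^* (1×N rows), Q^* (N×N) relative to the partition (1,1,N), Q symmetric. Define the (N+3)×(N+3) matrices Ã := ((−1,0,0,0),(a_1+a_2−b_1−b_2, a_1−b_2, a_2−b_1, a_*)) and B̃ := ((−1,1,1,0),(0, b_1, b_2, b_*)) and assume B̃ invertible. Then: (i) B̃^{−1}Ã equals the block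 matrix with rows (Q_{11}+2Q_{12}+Q_{22}−1, Q_{11}+Q_{12}−1, Q_{12}+Q_{22}−1, Q_1^*+Q_2^*), (Q_{11}+Q_{12}−1, Q_{11}, Q_{12}−1, Q_1^*), (Q_{12}+Q_{22}−1, Q_{12}−1, Q_{22}, Q_2^*), (Q_1^{*t}+Q_2^{*t}, Q_1^{*t}, Q_2^{*t}, Q^*); (ii) for any vector ν and ν̃ := (1, ν), B̃^{−1}ν̃ = ((B^{−1}ν)_1 + (B^{−1}ν)_2 − 1, B^{−1}ν); (iii) if f = (f_1, f_2, f^*) and f̃ = (f̃_0, f̃_1, f̃_2, f̃^*) satisfy f_1 = f̃_0 + f̃_1, f_2 = f̃_0 + f̃_2, f^* = f̃^*, then f̃ᵗ·B̃^{−1}ν̃ = fᵗ·B^{−1}ν − f̃_0. -/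
open scoped BigOperators
open Matrix


noncomputable section Stmt16

/-- Index type for an `(N+2) × (N+2)` matrix, relative to the partition `(1, 1, N)`. -/
abbrev PIdx (n : ℕ) := Unit ⊕ (Unit ⊕ Fin n)

/-- The first distinguished index. -/
def j1 {n : ℕ} : PIdx n := Sum.inl ()

/-- The second distinguished index. -/
def j2 {n : ℕ} : PIdx n := Sum.inr (Sum.inl ())

/-- The remaining indices. -/
def jr {n : ℕ} (k : Fin n) : PIdx n := Sum.inr (Sum.inr k)

variable {F : Type*} [Field F] {n : ℕ}

/-- The 2–3 moved matrix `Ã = ((−1,0,0,0), (a₁+a₂−b₁−b₂, a₁−b₂, a₂−b₁, a_*))`. -/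
def pAtil (A B : Matrix (PIdx n) (PIdx n) F) :
    Matrix (Unit ⊕ PIdx n) (Unit ⊕ PIdx n) F :=
  Matrix.of fun i j =>
    match i, j with
    | Sum.inl _, Sum.inl _ => -1
    | Sum.inl _, Sum.inr _ => 0
    | Sum.inr i, Sum.inl _ => A i j1 + A i j2 - B i j1 - B i j2
    | Sum.inr i, Sum.inr (Sum.inl _) => A i j1 - B i j2
    | Sum.inr i, Sum.inr (Sum.inr (Sum.inl _)) => A i j2 - B i j1
    | Sum.inr i, Sum.inr (Sum.inr (Sum.inr k)) => A i (jr k)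

/-- The 2–3 moved matrix `B̃ = ((−1,1,1,0), (0, b₁, b₂, b_*))`. -/
def pBtil (B : Matrix (PIdx n) (PIdx n) F) :
    Matrix (Unit ⊕ PIdx n) (Unit ⊕ PIdx n) F :=
  Matrix.of fun i j =>
    match i, j with
    | Sum.inl _, Sum.inl _ => -1
    | Sum.inl _, Sum.inr (Sum.inl _) => 1
    | Sum.inl _, Sum.inr (Sum.inr (Sum.inl _)) => 1
    | Sum.inl _, Sum.inr (Sum.inr (Sum.inr _)) => 0
    | Sum.inr _, Sum.inl _ => 0
    | Sum.inr i, Sum.inr j => B i j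

/-- Matrix identities for the 2–3 move, full rank case. -/
theorem pachner_matrix_identities_full_rank [CharZero F]
    (A B : Matrix (PIdx n) (PIdx n) F) (hB : IsUnit B.det)
    (Q : Matrix (PIdx n) (PIdx n) F) (hQdef : Q = B⁻¹ * A) (hQsym : Qᵀ = Q)
    (hBt : IsUnit (pBtil B).det)
    (ν : PIdx n → F)
    (νt : Unit ⊕ PIdx n → F)
    (hνt : νt = fun i => match i with | Sum.inl _ => 1 | Sum.inr i => ν i)
    (w : PIdx n → F) (hw : w = B⁻¹.mulVec ν)
    (f : PIdx n → F) (ft : Unit ⊕ PIdx n → F)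
    (hf1 : f j1 = ft (Sum.inl ()) + ft (Sum.inr j1))
    (hf2 : f j2 = ft (Sum.inl ()) + ft (Sum.inr j2))
    (hfr : ∀ k, f (jr k) = ft (Sum.inr (jr k))) :
    -- (i)
    (pBtil B)⁻¹ * pAtil A B
      = Matrix.of (fun i j =>
          match i, j with
          | Sum.inl _, Sum.inl _ => Q j1 j1 + 2 * Q j1 j2 + Q j2 j2 - 1
          | Sum.inl _, Sum.inr (Sum.inl _) => Q j1 j1 + Q j1 j2 - 1
          | Sum.inl _, Sum.inr (Sum.inr (Sum.inl _)) => Q j1 j2 + Q j2 j2 - 1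
          | Sum.inl _, Sum.inr (Sum.inr (Sum.inr b)) => Q j1 (jr b) + Q j2 (jr b)
          | Sum.inr (Sum.inl _), Sum.inl _ => Q j1 j1 + Q j1 j2 - 1
          | Sum.inr (Sum.inl _), Sum.inr (Sum.inl _) => Q j1 j1
          | Sum.inr (Sum.inl _), Sum.inr (Sum.inr (Sum.inl _)) => Q j1 j2 - 1
          | Sum.inr (Sum.inl _), Sum.inr (Sum.inr (Sum.inr b)) => Q j1 (jr b)
          | Sum.inr (Sum.inr (Sum.inl _)), Sum.inl _ => Q j1 j2 + Q j2 j2 - 1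
          | Sum.inr (Sum.inr (Sum.inl _)), Sum.inr (Sum.inl _) => Q j1 j2 - 1
          | Sum.inr (Sum.inr (Sum.inl _)), Sum.inr (Sum.inr (Sum.inl _)) => Q j2 j2
          | Sum.inr (Sum.inr (Sum.inl _)), Sum.inr (Sum.inr (Sum.inr b)) => Q j2 (jr b)
          | Sum.inr (Sum.inr (Sum.inr a)), Sum.inl _ => Q j1 (jr a) + Q j2 (jr a)
          | Sum.inr (Sum.inr (Sum.inr a)), Sum.inr (Sum.inl _) => Q j1 (jr a)
          | Sum.inr (Sum.inr (Sum.inr a)), Sum.inr (Sum.inr (Sum.inl _)) => Q j2 (jr a)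
          | Sum.inr (Sum.inr (Sum.inr a)), Sum.inr (Sum.inr (Sum.inr b)) =>
              Q (jr a) (jr b)) ∧
    -- (ii)
    (pBtil B)⁻¹.mulVec νt
      = (fun i =>
          match i with
          | Sum.inl _ => w j1 + w j2 - 1
          | Sum.inr j => w j) ∧
    -- (iii)
    dotProduct ft ((pBtil B)⁻¹.mulVec νt)
      = dotProduct f w - ft (Sum.inl ()) := by
  have hA : A = B * Q := by
    rw [hQdef, ← Matrix.mul_assoc, Matrix.mul_nonsing_inv B hB, Matrix.one_mul]
  have hsym : ∀ i j : PIdx n, Q i j = Q j i := fun i j =>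
    (congrFun (congrFun hQsym i) j).symm
  have hν : ν = B.mulVec w := by
    rw [hw, Matrix.mulVec_mulVec, Matrix.mul_nonsing_inv B hB, Matrix.one_mulVec]
  have cancel : ∀ (M C : Matrix (Unit ⊕ PIdx n) (Unit ⊕ PIdx n) F),
      pBtil B * M = C → (pBtil B)⁻¹ * C = M := by
    intro M C h
    rw [← h, ← Matrix.mul_assoc, Matrix.nonsing_inv_mul _ hBt, Matrix.one_mul]
  have cancelv : ∀ (v u : Unit ⊕ PIdx n → F),
      (pBtil B).mulVec v = u → (pBtil B)⁻¹.mulVec u = v := by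
    intro v u h
    rw [← h, Matrix.mulVec_mulVec, Matrix.nonsing_inv_mul _ hBt, Matrix.one_mulVec]
  have hs1 : ∀ a : Fin n, Q (Sum.inr (Sum.inr a)) (Sum.inl ())
      = Q (Sum.inl ()) (Sum.inr (Sum.inr a)) := fun a => hsym _ _
  have hs2 : ∀ a : Fin n, Q (Sum.inr (Sum.inr a)) (Sum.inr (Sum.inl ()))
      = Q (Sum.inr (Sum.inl ())) (Sum.inr (Sum.inr a)) := fun a => hsym _ _
  have hs12 : Q (Sum.inr (Sum.inl ())) (Sum.inl ())
      = Q (Sum.inl ()) (Sum.inr (Sum.inl ())) := hsym _ _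
  have part2 : (pBtil B)⁻¹.mulVec νt
      = (fun i : Unit ⊕ PIdx n =>
          match i with
          | Sum.inl _ => w j1 + w j2 - 1
          | Sum.inr j => w j) := by
    apply cancelv
    funext i
    rcases i with _ | i
    · simp [Matrix.mulVec, dotProduct, pBtil, Fintype.sum_sum_type, hνt,
        j1, j2, jr]
    · simp only [hνt, hν, Matrix.mulVec, dotProduct, pBtil,
        Fintype.sum_sum_type, Matrix.of_apply, Fintype.univ_unit,
        Finset.sum_const, Finset.card_singleton, one_smul]
      simp [j1, j2, jr]
  refine ⟨?_, part2, ?_⟩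
  · apply cancel
    ext i j
    rcases i with _ | (_ | (_ | i)) <;> rcases j with _ | (_ | (_ | j)) <;>
      simp only [Matrix.mul_apply, pBtil, pAtil, Matrix.of_apply,
        Fintype.sum_sum_type, Fintype.univ_unit, Finset.sum_const,
        Finset.card_singleton, one_smul, Finset.sum_singleton, hA, hs1, hs2, hs12, j1, j2, jr,
        mul_add, mul_sub, mul_one, mul_zero, zero_mul, one_mul, neg_mul,
        Finset.sum_add_distrib, Finset.sum_sub_distrib, Finset.sum_neg_distrib] <;>
      ring
  · have hf1' : f (Sum.inl ()) = ft (Sum.inl ()) + ft (Sum.inr (Sum.inl ())) := hf1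
    have hf2' : f (Sum.inr (Sum.inl ()))
        = ft (Sum.inl ()) + ft (Sum.inr (Sum.inr (Sum.inl ()))) := hf2
    have hfr' : ∀ a : Fin n,
        f (Sum.inr (Sum.inr a)) = ft (Sum.inr (Sum.inr (Sum.inr a))) := hfr
    rw [part2]
    simp only [dotProduct, Fintype.sum_sum_type, Fintype.univ_unit,
      Finset.sum_const, Finset.card_singleton, one_smul, Finset.sum_singleton,
      hf1', hf2', hfr', j1, j2, jr, mul_add, mul_sub, mul_one, add_mul,
      Finset.sum_add_distrib]
    ring
end Stmt16
end
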